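/- arXiv:1001.0100 — 10 statements merged into one kernel-verified Lean document; each statement's English description precedes it below -/
import Mathlib

section
/- Every prime p ≡ 1 (mod 8) can be written as p = c² + 8d² for some integers c and d. -/
theorem stmt1 (p : ℕ) (hp : p.Prime) (h8 : p % 8 = 1) :
    ∃ c d : ℤ, (p : ℤ) = c ^ 2 + 8 * d ^ 2 := by
  haveI : Fact p.Prime := ⟨hp⟩
  have hp2 : p ≠ 2 := by omega
  -- -2 is a square mod p
  obtain ⟨s, hs⟩ : IsSquare (2 : ZMod p) := by
    rw [ZMod.exists_sq_eq_two_iff hp2]; left; exact h8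
  obtain ⟨t, ht⟩ : IsSquare (-1 : ZMod p) := by
    rw [ZMod.exists_sq_eq_neg_one_iff]; omega
  set a : ZMod p := s * t with ha
  have ha2 : a * a = -2 := by
    have h : a * a = (s * s) * (t * t) := by ring
    rw [h, ← hs, ← ht]; ring
  -- pigeonhole (Thue's lemma)
  obtain ⟨n, hn⟩ : ∃ n, Nat.sqrt p = n := ⟨_, rfl⟩
  have hle : n ^ 2 ≤ p := by rw [← hn]; exact Nat.sqrt_le' p
  have hlt : p < (n + 1) ^ 2 := by rw [← hn]; exact Nat.lt_succ_sqrt' p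
  have hn2 : n * n < p := by
    rcases lt_or_eq_of_le hle with h | h
    · calc n * n = n ^ 2 := by ring
      _ < p := h
    · exfalso
      have hd : n ∣ p := ⟨n, by rw [← h]; ring⟩
      rcases hp.eq_one_or_self_of_dvd n hd with h1 | h1
      · rw [h1] at h; nlinarith [hp.two_le]
      · rw [h1] at h; nlinarith [hp.two_le]
  have hcard : Fintype.card (ZMod p) < Fintype.card (Fin (n+1) × Fin (n+1)) := by
    rw [ZMod.card, Fintype.card_prod, Fintype.card_fin]
    calc p < (n+1) ^ 2 := hlt
    _ = (n+1) * (n+1) := by ring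
  obtain ⟨⟨x1, y1⟩, ⟨x2, y2⟩, hne, heq⟩ :=
    Fintype.exists_ne_map_eq_of_card_lt
      (fun q : Fin (n+1) × Fin (n+1) => ((q.1 : ℕ) : ZMod p) + a * ((q.2 : ℕ) : ZMod p)) hcard
  simp only [Prod.mk.injEq] at heq
  set u : ℤ := (x1 : ℕ) - (x2 : ℕ) with hu
  set v : ℤ := (y1 : ℕ) - (y2 : ℕ) with hv
  have huv : ((u : ZMod p)) + a * (v : ZMod p) = 0 := by
    simp only [hu, hv]
    push_cast
    linear_combination heq
  have hdvd : (p : ℤ) ∣ u ^ 2 + 2 * v ^ 2 := by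
    rw [← ZMod.intCast_zmod_eq_zero_iff_dvd]
    push_cast
    linear_combination ((u : ZMod p) - a * (v : ZMod p)) * huv + ((v : ZMod p))^2 * ha2
  -- bounds
  have hx1 : (x1 : ℕ) ≤ n := Nat.lt_succ_iff.mp x1.isLt
  have hx2 : (x2 : ℕ) ≤ n := Nat.lt_succ_iff.mp x2.isLt
  have hy1 : (y1 : ℕ) ≤ n := Nat.lt_succ_iff.mp y1.isLt
  have hy2 : (y2 : ℕ) ≤ n := Nat.lt_succ_iff.mp y2.isLt
  have hun : u ^ 2 < (p : ℤ) := by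
    have h1 : u ^ 2 ≤ (n : ℤ) * n := by
      have : -(n : ℤ) ≤ u ∧ u ≤ n := by constructor <;> (simp only [hu]; push_cast; omega)
      nlinarith [this.1, this.2]
    have h2 : ((n : ℤ) * n) < p := by exact_mod_cast hn2
    linarith
  have hvn : v ^ 2 < (p : ℤ) := by
    have h1 : v ^ 2 ≤ (n : ℤ) * n := by
      have : -(n : ℤ) ≤ v ∧ v ≤ n := by constructor <;> (simp only [hv]; push_cast; omega)
      nlinarith [this.1, this.2]
    have h2 : ((n : ℤ) * n) < p := by exact_mod_cast hn2
    linarith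
  have hpos : 0 < u ^ 2 + 2 * v ^ 2 := by
    rcases eq_or_ne u 0 with h | h
    · rcases eq_or_ne v 0 with h' | h'
      · exfalso
        apply hne
        have e1 : (x1 : ℕ) = (x2 : ℕ) := by omega
        have e2 : (y1 : ℕ) = (y2 : ℕ) := by omega
        exact Prod.ext (Fin.ext e1) (Fin.ext e2)
      · positivity
    · positivity
  obtain ⟨k, hk⟩ := hdvd
  clear_value a u v
  clear huv heq ha2 hs ht ha a s t hcard hu hv hx1 hx2 hy1 hy2 hne x1 x2 y1 y2 hle hlt hn hn2 n
  have hppos : (0 : ℤ) < p := by exact_mod_cast hp.pos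
  have hk3 : k = 1 ∨ k = 2 := by
    have hk1 : 0 < k := by
      by_contra hcon
      push_neg at hcon
      have hle0 : (p : ℤ) * k ≤ 0 := mul_nonpos_of_nonneg_of_nonpos hppos.le hcon
      rw [← hk] at hle0
      exact absurd hpos (not_lt.mpr hle0)
    have hk2 : k < 3 := by
      have h1 : (p : ℤ) * k < (p : ℤ) * 3 := by rw [← hk]; linarith
      exact lt_of_mul_lt_mul_left h1 hppos.le
    omega
  -- get p = c^2 + 2*d^2
  obtain ⟨c, d, hcd⟩ : ∃ c d : ℤ, (p : ℤ) = c ^ 2 + 2 * d ^ 2 := by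
    rcases hk3 with h | h
    · exact ⟨u, v, by rw [h] at hk; linarith⟩
    · rw [h] at hk
      have hue : Even u := by
        have : Even (u ^ 2) := by
          refine ⟨(p : ℤ) - v ^ 2, by linarith⟩
        exact (Int.even_pow.mp this).1
      obtain ⟨w, hw⟩ := hue
      refine ⟨v, w, ?_⟩
      have h4 : (w + w) ^ 2 + 2 * v ^ 2 = (p : ℤ) * 2 := by rw [← hw]; exact hk
      have h5 : (w + w) ^ 2 = 4 * w ^ 2 := by ring
      linarith
  -- parity analysis to upgrade to c^2 + 8*d^2
  have hpodd : ¬ Even ((p : ℤ)) := by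
    rintro ⟨m, hm⟩
    have : (2 : ℤ) ∣ p := ⟨m, by linarith⟩
    have : (2 : ℕ) ∣ p := by exact_mod_cast this
    omega
  have hcodd : ¬ Even c := by
    rintro ⟨m, hm⟩
    exact hpodd ⟨m * c + d ^ 2, by rw [hcd, hm]; ring⟩
  obtain ⟨m, hm⟩ := Int.not_even_iff_odd.mp hcodd
  obtain ⟨j, hj⟩ : Even (m * (m + 1)) := Int.even_mul_succ_self m
  have hp8 : ∃ q : ℤ, (p : ℤ) = 8 * q + 1 := by
    obtain ⟨q, hq⟩ : (8 : ℕ) ∣ p - 1 := by omega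
    exact ⟨q, by have : p = 8 * q + 1 := by omega
                 exact_mod_cast this⟩
  obtain ⟨q, hq⟩ := hp8
  have hde : Even d := by
    have hd2 : 2 * d ^ 2 = 8 * (q - j) := by
      linear_combination (-1 : ℤ) * hcd + hq - (c + 2 * m + 1) * hm - 4 * hj
    have : Even (d ^ 2) := ⟨2 * (q - j), by linarith⟩
    exact (Int.even_pow.mp this).1
  obtain ⟨e, he⟩ := hde
  exact ⟨c, e, by rw [hcd, he]; ring⟩
end

section
/- Let p ≡ 1 (mod 4) be prime, i ∈ 𝔽_p with i² = -1, and let η be the endomorphism of E(𝔽_p), E: y² = x³ - x, given by η(P) = P + [i]P where [i](x,y) = (-x, iy). Then the kernel of η consists exactly of the point at infinity and the point (0, 0). -/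
/-- The elliptic curve `y² = x³ - x` over `ℤ/pℤ`, as a Weierstrass curve in affine coordinates. -/
noncomputable def Ecurve (p : ℕ) : WeierstrassCurve.Affine (ZMod p) :=
  { a₁ := 0, a₂ := 0, a₃ := 0, a₄ := -1, a₆ := 0 }

/-!
Since `[i]` maps `(x, y)` to `(-x, i y)` while `-(x, y) = (x, -y)`, a point `P ≠ ∞` satisfies
`[i]P = -P` only if `-x = x`, i.e. `x = 0` in odd characteristic; the curve equation then forces
`y = 0`. Conversely `[i]` fixes `(0, 0)`, which is its own negative.
-/

theorem ZMod.neg_eq_self_iff_of_odd {n : ℕ} (hn : Odd n) (a : ZMod n) : -a = a ↔ a = 0 := by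
  rw [ZMod.neg_eq_self_iff, or_iff_left]
  exact fun h ↦ Nat.not_even_iff_odd.mpr hn ⟨a.val, by omega⟩

namespace Ecurve

variable {p : ℕ}

@[simp]
theorem negY (x y : ZMod p) : (Ecurve p).negY x y = -y := by
  simp [WeierstrassCurve.Affine.negY, Ecurve]

theorem equation_zero_iff [Fact p.Prime] (y : ZMod p) : (Ecurve p).Equation 0 y ↔ y = 0 := by
  simp [WeierstrassCurve.Affine.equation_iff, Ecurve]

end Ecurve

theorem stmt4_general (p : ℕ) [Fact p.Prime] (h4 : p % 4 = 1) (i : ZMod p)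
    (φ : (Ecurve p).Point → (Ecurve p).Point) (hφ0 : φ 0 = 0)
    (hφ : ∀ (x y : ZMod p) (h : (Ecurve p).Nonsingular x y),
      ∃ h' : (Ecurve p).Nonsingular (-x) (i * y),
        φ (WeierstrassCurve.Affine.Point.some _ _ h) = WeierstrassCurve.Affine.Point.some _ _ h')
    (P : (Ecurve p).Point) :
    P + φ P = 0 ↔
      P = 0 ∨ ∃ h₀ : (Ecurve p).Nonsingular 0 0,
        P = WeierstrassCurve.Affine.Point.some _ _ h₀ := by
  rw [add_eq_zero_iff_eq_neg]
  rcases P with _ | ⟨x, y, h⟩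
  · refine iff_of_true ?_ (Or.inl rfl)
    change 0 = -φ 0
    rw [hφ0, neg_zero]
  obtain ⟨h', hφxy⟩ := hφ x y h
  rw [hφxy, WeierstrassCurve.Affine.Point.neg_some, WeierstrassCurve.Affine.Point.some.injEq,
    Ecurve.negY]
  simp only [WeierstrassCurve.Affine.Point.some.injEq, reduceCtorEq, false_or, exists_prop]
  constructor
  · rintro ⟨hx, -⟩
    obtain rfl : x = 0 := (ZMod.neg_eq_self_iff_of_odd (Nat.odd_iff.mpr (by omega)) x).mp hx.symm
    obtain rfl : y = 0 := (Ecurve.equation_zero_iff y).mp h.1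
    exact ⟨h, rfl, rfl⟩
  · rintro ⟨-, rfl, rfl⟩
    simp

theorem stmt4 (p : ℕ) [Fact p.Prime] (h4 : p % 4 = 1) (i : ZMod p) (hi : i ^ 2 = -1)
    (φ : (Ecurve p).Point → (Ecurve p).Point) (hφ0 : φ 0 = 0)
    (hφ : ∀ (x y : ZMod p) (h : (Ecurve p).Nonsingular x y),
      ∃ h' : (Ecurve p).Nonsingular (-x) (i * y),
        φ (WeierstrassCurve.Affine.Point.some _ _ h) = WeierstrassCurve.Affine.Point.some _ _ h')
    (P : (Ecurve p).Point) :
    P + φ P = 0 ↔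
      P = 0 ∨ ∃ h₀ : (Ecurve p).Nonsingular 0 0,
        P = WeierstrassCurve.Affine.Point.some _ _ h₀ :=
  stmt4_general p h4 i φ hφ0 hφ P
end

section
/- Let p ≡ 1 (mod 4) be prime, i ∈ 𝔽_p with i² = -1, E: y² = x³ - x over 𝔽_p, and η(P) = P + [i]P. If (x, y) ∈ E(𝔽_p) with x ≠ 0, then the x-coordinate of η(x,y) equals ((1-i)y/(2x))², and in particular is a square in 𝔽_p. -/
namespace WeierstrassCurve.Affine

variable {R : Type*} [CommRing R] {W : Affine R}

lemma addX_neg_of_a₁_eq_zero_of_a₂_eq_zero (ha₁ : W.a₁ = 0) (ha₂ : W.a₂ = 0) (x ℓ : R) :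
    W.addX x (-x) ℓ = ℓ ^ 2 := by
  simp only [addX, ha₁, ha₂]
  ring

end WeierstrassCurve.Affine

namespace WeierstrassCurve.Affine.Point

variable {F : Type*} [Field F] [DecidableEq F] {W : Affine F}

lemma exists_some_add_some_neg_X_eq (ha₁ : W.a₁ = 0) (ha₂ : W.a₂ = 0) {x y y' : F}
    (hx : x ≠ -x) (h : W.Nonsingular x y) (h' : W.Nonsingular (-x) y') :
    ∃ (x'' y'' : F) (h'' : W.Nonsingular x'' y''),
      some _ _ h + some _ _ h' = some _ _ h'' ∧ x'' = ((y - y') / (2 * x)) ^ 2 := by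
  refine ⟨_, _, _, add_of_X_ne hx, ?_⟩
  rw [addX_neg_of_a₁_eq_zero_of_a₂_eq_zero ha₁ ha₂, slope_of_X_ne hx, sub_neg_eq_add, ← two_mul]

end WeierstrassCurve.Affine.Point

open WeierstrassCurve.Affine.Point

theorem stmt5_general (p : ℕ) [Fact p.Prime] (h4 : p % 4 = 1) (i : ZMod p)
    (φ : (Ecurve p).Point → (Ecurve p).Point)
    (hφ : ∀ (x y : ZMod p) (h : (Ecurve p).Nonsingular x y),
      ∃ h' : (Ecurve p).Nonsingular (-x) (i * y),
        φ (WeierstrassCurve.Affine.Point.some _ _ h) = WeierstrassCurve.Affine.Point.some _ _ h')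
    (x y : ZMod p) (h : (Ecurve p).Nonsingular x y) (hx : x ≠ 0) :
    ∃ (x' y' : ZMod p) (h' : (Ecurve p).Nonsingular x' y'),
      WeierstrassCurve.Affine.Point.some _ _ h + φ (WeierstrassCurve.Affine.Point.some _ _ h) =
        WeierstrassCurve.Affine.Point.some _ _ h' ∧
      x' = ((1 - i) * y / (2 * x)) ^ 2 ∧ IsSquare x' := by
  obtain ⟨h_iP, hφx⟩ := hφ x y h
  have hchar : ringChar (ZMod p) ≠ 2 := by
    rw [ZMod.ringChar_zmod_n]
    omega
  have hx_ne_neg : x ≠ -x := fun hx_eq =>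
    hx ((Ring.eq_self_iff_eq_zero_of_char_ne_two hchar).mp hx_eq.symm)
  obtain ⟨x', y', h', hadd, hx'⟩ := exists_some_add_some_neg_X_eq rfl rfl hx_ne_neg h h_iP
  rw [show y - i * y = (1 - i) * y by ring] at hx'
  rw [hφx]
  exact ⟨x', y', h', hadd, hx', hx' ▸ IsSquare.sq _⟩

theorem stmt5 (p : ℕ) [Fact p.Prime] (h4 : p % 4 = 1) (i : ZMod p) (hi : i ^ 2 = -1)
    (φ : (Ecurve p).Point → (Ecurve p).Point) (hφ0 : φ 0 = 0)
    (hφ : ∀ (x y : ZMod p) (h : (Ecurve p).Nonsingular x y),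
      ∃ h' : (Ecurve p).Nonsingular (-x) (i * y),
        φ (WeierstrassCurve.Affine.Point.some _ _ h) = WeierstrassCurve.Affine.Point.some _ _ h')
    (x y : ZMod p) (h : (Ecurve p).Nonsingular x y) (hx : x ≠ 0) :
    ∃ (x' y' : ZMod p) (h' : (Ecurve p).Nonsingular x' y'),
      WeierstrassCurve.Affine.Point.some _ _ h + φ (WeierstrassCurve.Affine.Point.some _ _ h) =
        WeierstrassCurve.Affine.Point.some _ _ h' ∧
      x' = ((1 - i) * y / (2 * x)) ^ 2 ∧ IsSquare x' :=
  stmt5_general p h4 i φ hφ x y h hx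
end

section
/- Let p ≡ 1 (mod 4) be prime, E: y² = x³ - x over 𝔽_p, and η = 1 + [i] where [i](x,y) = (-x, iy) for a fixed square root i of -1 in 𝔽_p. A point (x₀, y₀) ∈ E(𝔽_p) with x₀ ≠ 0 lies in the image of η on E(𝔽_p) if and only if x₀ is a square in 𝔽_p. -/
/-!
The argument works on any curve `y² = x³ + a x` with `a ≠ 0` in characteristic `≠ 2`.
For `P = (x, y)` with `x ≠ 0`, the points `P` and `[i]P = (-x, i y)` have opposite abscissae, so
if `ℓ` is the slope of the chord through them, `X(P + [i]P) = ℓ² - x - (-x) = ℓ²` is a square;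
if `x = 0` then `P = (0, 0)` is `2`-torsion and `P + [i]P = 0`.
Conversely, if `x₀ = t²`, put `A = t³ + y₀`: the point `P = (i A / t, (i - 1) A)` lies on the
curve because `(A - t³)² = y₀²`, the chord from `P` to `[i]P` has slope `t`, and hence
`P + [i]P = (x₀, y₀)`.
-/

open WeierstrassCurve.Affine

def j1728Curve {F : Type*} [Field F] (a : F) : WeierstrassCurve.Affine F :=
  { a₁ := 0, a₂ := 0, a₃ := 0, a₄ := a, a₆ := 0 }

namespace j1728Curve

variable {F : Type*} [Field F] {a : F}

lemma equation_iff {x y : F} : (j1728Curve a).Equation x y ↔ y ^ 2 = x ^ 3 + a * x := by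
  rw [WeierstrassCurve.Affine.equation_iff]
  simp only [j1728Curve]
  ring_nf

lemma Δ_eq : (j1728Curve a).Δ = -64 * a ^ 3 := by
  simp only [WeierstrassCurve.Δ, WeierstrassCurve.b₂, WeierstrassCurve.b₄, WeierstrassCurve.b₆,
    WeierstrassCurve.b₈, j1728Curve]
  ring

lemma nonsingular_of_sq_eq (hF : ringChar F ≠ 2) (ha : a ≠ 0) {x y : F}
    (h : y ^ 2 = x ^ 3 + a * x) : (j1728Curve a).Nonsingular x y := by
  refine (equation_iff_nonsingular_of_Δ_ne_zero ?_).mp (equation_iff.mpr h)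
  rw [Δ_eq, show (64 : F) = 2 ^ 6 by norm_num]
  simp [Ring.two_ne_zero hF, ha]

lemma addX_neg (x ℓ : F) : (j1728Curve a).addX x (-x) ℓ = ℓ ^ 2 := by
  simp only [addX, j1728Curve]
  ring

lemma isSquare_of_some_add_some_neg [DecidableEq F] (hF : ringChar F ≠ 2) {x y y' x₀ y₀ : F}
    (h : (j1728Curve a).Nonsingular x y) (h' : (j1728Curve a).Nonsingular (-x) y')
    (h₀ : (j1728Curve a).Nonsingular x₀ y₀)
    (hsum : Point.some _ _ h + Point.some _ _ h' = Point.some _ _ h₀) :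
    IsSquare x₀ := by
  by_cases hx : x = 0
  · subst hx
    have hy : y = 0 := by simpa using equation_iff.mp h.1
    have hy' : y' = 0 := by simpa using equation_iff.mp h'.1
    subst hy hy'
    rw [Point.add_of_Y_eq neg_zero.symm (by simp [negY, j1728Curve])] at hsum
    exact absurd hsum.symm (Point.some_ne_zero h₀)
  · have hxx : x ≠ -x := fun h => hx ((Ring.eq_self_iff_eq_zero_of_char_ne_two hF).mp h.symm)
    rw [Point.add_of_X_ne hxx, Point.some.injEq, addX_neg] at hsum
    exact ⟨_, hsum.1.symm.trans (sq _)⟩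

lemma exists_some_add_some_neg_mul_eq_of_isSquare [DecidableEq F] (hF : ringChar F ≠ 2)
    (ha : a ≠ 0) {i x₀ y₀ : F} (hi : i ^ 2 = -1) (h₀ : (j1728Curve a).Nonsingular x₀ y₀)
    (hx₀ : x₀ ≠ 0) (hsq : IsSquare x₀) :
    ∃ (x y : F) (h : (j1728Curve a).Nonsingular x y) (h' : (j1728Curve a).Nonsingular (-x) (i * y)),
      Point.some _ _ h + Point.some _ _ h' = Point.some _ _ h₀ := by
  obtain ⟨t, rfl⟩ := hsq
  have ht0 : t ≠ 0 := by rintro rfl; simp_all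
  have hy₀ : y₀ ^ 2 = t ^ 6 + a * t ^ 2 := by linear_combination equation_iff.mp h₀.1
  obtain ⟨A, hA⟩ : ∃ A, A = t ^ 3 + y₀ := ⟨_, rfl⟩
  have hA0 : A ≠ 0 := by
    rintro rfl
    have : a * t ^ 2 = 0 := by linear_combination -hy₀ + (t ^ 3 - y₀) * hA
    exact mul_ne_zero ha (pow_ne_zero 2 ht0) this
  have hi0 : i ≠ 0 := by rintro rfl; exact Ring.two_ne_zero hF (by linear_combination 2 * hi)
  have heq : ((i - 1) * A) ^ 2 = (i * A / t) ^ 3 + a * (i * A / t) := by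
    field_simp
    linear_combination (A * t ^ 3 - i * A ^ 2) * hi + i * hy₀ + i * (A - t ^ 3 + y₀) * hA
  have heq' : (i * ((i - 1) * A)) ^ 2 = (-(i * A / t)) ^ 3 + a * -(i * A / t) := by
    linear_combination ((i - 1) * A) ^ 2 * hi - heq
  have hx : i * A / t ≠ -(i * A / t) := fun h => div_ne_zero (mul_ne_zero hi0 hA0) ht0
    ((Ring.eq_self_iff_eq_zero_of_char_ne_two hF).mp h.symm)
  have hslope :
      (j1728Curve a).slope (i * A / t) (-(i * A / t)) ((i - 1) * A) (i * ((i - 1) * A)) = t := by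
    rw [slope_of_X_ne hx, div_eq_iff (sub_ne_zero.mpr hx)]
    field_simp
    linear_combination -hi
  refine ⟨_, _, nonsingular_of_sq_eq hF ha heq, nonsingular_of_sq_eq hF ha heq', ?_⟩
  rw [Point.add_of_X_ne hx, Point.some.injEq, hslope, addX_neg]
  refine ⟨sq t, ?_⟩
  simp only [addY, negAddY, addX_neg]
  simp only [negY, j1728Curve]
  field_simp
  linear_combination hA

end j1728Curve

theorem stmt6 (p : ℕ) [Fact p.Prime] (h4 : p % 4 = 1) (i : ZMod p) (hi : i ^ 2 = -1)
    (φ : (Ecurve p).Point → (Ecurve p).Point) (hφ0 : φ 0 = 0)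
    (hφ : ∀ (x y : ZMod p) (h : (Ecurve p).Nonsingular x y),
      ∃ h' : (Ecurve p).Nonsingular (-x) (i * y),
        φ (WeierstrassCurve.Affine.Point.some _ _ h) = WeierstrassCurve.Affine.Point.some _ _ h')
    (x₀ y₀ : ZMod p) (h₀ : (Ecurve p).Nonsingular x₀ y₀) (hx₀ : x₀ ≠ 0) :
    (∃ P : (Ecurve p).Point, P + φ P = WeierstrassCurve.Affine.Point.some _ _ h₀) ↔
      IsSquare x₀ := by
  have hF : ringChar (ZMod p) ≠ 2 := by rw [ZMod.ringChar_zmod_n]; omega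
  -- `Ecurve p` unfolds to `j1728Curve (-1)`.
  constructor
  · rintro ⟨_ | ⟨_, _, h⟩, hP⟩
    · rw [← Point.zero_def, hφ0, zero_add] at hP
      exact absurd hP.symm (Point.some_ne_zero h₀)
    · obtain ⟨h', hφP⟩ := hφ _ _ h
      rw [hφP] at hP
      exact j1728Curve.isSquare_of_some_add_some_neg (a := -1) hF h h' h₀ hP
  · intro hsq
    obtain ⟨x, y, h, _, hsum⟩ := j1728Curve.exists_some_add_some_neg_mul_eq_of_isSquare (a := -1)
      hF (neg_ne_zero.mpr one_ne_zero) hi h₀ hx₀ hsq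
    obtain ⟨_, hφP⟩ := hφ x y h
    exact ⟨_, by rw [hφP]; exact hsum⟩
end

section
/- Let p ≡ 1 (mod 8) be prime, E: y² = x³ - x over 𝔽_p, and η = 1 + [i]. Then the set of x-coordinates of affine points P ∈ E(𝔽_p-bar) with η²(P) = ∞ and η(P) ≠ ∞ is {1, -1}. -/
/-- The elliptic curve `y² = x³ - x` over the algebraic closure of `ℤ/pℤ`. -/
noncomputable def EcurveBar (p : ℕ) [Fact p.Prime] : WeierstrassCurve.Affine (AlgebraicClosure (ZMod p)) :=
  { a₁ := 0, a₂ := 0, a₃ := 0, a₄ := -1, a₆ := 0 }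

open Classical in
theorem stmt7 (p : ℕ) [Fact p.Prime] (h8 : p % 8 = 1) (i : ZMod p) (hi : i ^ 2 = -1)
    (φ : (EcurveBar p).Point → (EcurveBar p).Point) (hφ0 : φ 0 = 0)
    (hφ : ∀ (x y : AlgebraicClosure (ZMod p)) (h : (EcurveBar p).Nonsingular x y),
      ∃ h' : (EcurveBar p).Nonsingular (-x)
        (algebraMap (ZMod p) (AlgebraicClosure (ZMod p)) i * y),
        φ (WeierstrassCurve.Affine.Point.some _ _ h) = WeierstrassCurve.Affine.Point.some _ _ h')
    (η : (EcurveBar p).Point → (EcurveBar p).Point) (hη : ∀ P, η P = P + φ P)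
    (x y : AlgebraicClosure (ZMod p)) (h : (EcurveBar p).Nonsingular x y) :
    (η (η (WeierstrassCurve.Affine.Point.some _ _ h)) = 0 ∧
      η (WeierstrassCurve.Affine.Point.some _ _ h) ≠ 0) ↔ (x = 1 ∨ x = -1) := by
  have hp1 : 1 < p := (Fact.out (p := p.Prime)).one_lt
  have ha₁ : (EcurveBar p).a₁ = 0 := rfl
  have ha₂ : (EcurveBar p).a₂ = 0 := rfl
  have ha₃ : (EcurveBar p).a₃ = 0 := rfl
  have ha₄ : (EcurveBar p).a₄ = -1 := rfl
  have ha₆ : (EcurveBar p).a₆ = 0 := rfl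
  have h2 : (2 : AlgebraicClosure (ZMod p)) ≠ 0 := by
    have h2n : ((2 : ℕ) : AlgebraicClosure (ZMod p)) ≠ 0 := by
      rw [Ne, CharP.cast_eq_zero_iff (AlgebraicClosure (ZMod p)) p]
      intro hdvd
      have := Nat.le_of_dvd (by norm_num) hdvd
      omega
    simpa using h2n
  have hI2 : (algebraMap (ZMod p) (AlgebraicClosure (ZMod p)) i) ^ 2 = -1 := by
    rw [← map_pow, hi, map_neg, map_one]
  have hI1 : (1 : AlgebraicClosure (ZMod p))
      - algebraMap (ZMod p) (AlgebraicClosure (ZMod p)) i ≠ 0 := by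
    intro hc
    have hieq : algebraMap (ZMod p) (AlgebraicClosure (ZMod p)) i = 1 := by
      linear_combination -hc
    rw [hieq, one_pow] at hI2
    exact h2 (by linear_combination hI2)
  -- Lemma A : η (some hq) = 0 ↔ u = 0
  have lemA : ∀ (u v : AlgebraicClosure (ZMod p)) (hq : (EcurveBar p).Nonsingular u v),
      η (WeierstrassCurve.Affine.Point.some _ _ hq) = 0 ↔ u = 0 := by
    intro u v hq
    obtain ⟨hq', hfe⟩ := hφ u v hq
    rw [hη, hfe]
    by_cases hu : u = 0
    · subst hu
      have hv : v = 0 := by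
        have he := hq.1
        rw [WeierstrassCurve.Affine.equation_iff, ha₁, ha₂, ha₃, ha₄, ha₆] at he
        have hv2 : v ^ 2 = 0 := by linear_combination he
        exact pow_eq_zero_iff (n := 2) (by norm_num) |>.mp hv2
      subst hv
      simp only [iff_true]
      exact WeierstrassCurve.Affine.Point.add_of_Y_eq (by ring)
        (by rw [WeierstrassCurve.Affine.negY, ha₁, ha₃]; ring)
    · simp only [hu, iff_false]
      have hne : u ≠ -u := fun hc => hu (by
        have h2u : 2 * u = 0 := by linear_combination hc
        rcases mul_eq_zero.mp h2u with h' | h'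
        · exact absurd h' h2
        · exact h')
      rw [WeierstrassCurve.Affine.Point.add_of_X_ne hne]
      exact WeierstrassCurve.Affine.Point.some_ne_zero _
  by_cases hx0 : x = 0
  · have hL : η (WeierstrassCurve.Affine.Point.some _ _ h) = 0 := (lemA x y h).mpr hx0
    constructor
    · rintro ⟨-, hne⟩; exact absurd hL hne
    · rintro (h1 | h1)
      · exfalso
        have h10 : (1 : AlgebraicClosure (ZMod p)) = 0 := by
          rw [h1] at hx0; exact hx0
        exact one_ne_zero h10
      · exfalso
        have h10 : (1 : AlgebraicClosure (ZMod p)) = 0 := by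
          rw [h1] at hx0; linear_combination -hx0
        exact one_ne_zero h10
  · obtain ⟨h', hfe⟩ := hφ x y h
    have hne : x ≠ -x := fun hc => hx0 (by
      have h2x : 2 * x = 0 := by linear_combination hc
      rcases mul_eq_zero.mp h2x with h'' | h''
      · exact absurd h'' h2
      · exact h'')
    have hηP : η (WeierstrassCurve.Affine.Point.some _ _ h) =
        WeierstrassCurve.Affine.Point.some _ _
          (WeierstrassCurve.Affine.nonsingular_add h h' fun hc => (hne hc.1).elim) := by
      rw [hη, hfe, WeierstrassCurve.Affine.Point.add_of_X_ne hne]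
    rw [hηP]
    have hL : (EcurveBar p).slope x (-x) y
          (algebraMap (ZMod p) (AlgebraicClosure (ZMod p)) i * y)
        = (y - algebraMap (ZMod p) (AlgebraicClosure (ZMod p)) i * y) / (x - -x) :=
      WeierstrassCurve.Affine.slope_of_X_ne hne
    have hxne : x - -x ≠ 0 := sub_ne_zero.mpr hne
    have hx3 : (EcurveBar p).addX x (-x)
          ((EcurveBar p).slope x (-x) y (algebraMap (ZMod p) (AlgebraicClosure (ZMod p)) i * y)) =
        ((EcurveBar p).slope x (-x) y
          (algebraMap (ZMod p) (AlgebraicClosure (ZMod p)) i * y)) ^ 2 := by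
      rw [WeierstrassCurve.Affine.addX, ha₁, ha₂]; ring
    have hsne : η (WeierstrassCurve.Affine.Point.some _ _
        (WeierstrassCurve.Affine.nonsingular_add h h' fun hc => (hne hc.1).elim)) = 0 ↔
        (EcurveBar p).addX x (-x)
          ((EcurveBar p).slope x (-x) y (algebraMap (ZMod p) (AlgebraicClosure (ZMod p)) i * y))
          = 0 := lemA _ _ _
    rw [hsne]
    have hy2 : y ^ 2 = x ^ 3 - x := by
      have he := h.1
      rw [WeierstrassCurve.Affine.equation_iff, ha₁, ha₂, ha₃, ha₄, ha₆] at he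
      linear_combination he
    constructor
    · rintro ⟨hz, -⟩
      rw [hx3, hL] at hz
      have hnum : y - algebraMap (ZMod p) (AlgebraicClosure (ZMod p)) i * y = 0 := by
        have hz0 := pow_eq_zero_iff (n := 2) (by norm_num) |>.mp hz
        rcases div_eq_zero_iff.mp hz0 with h'' | h''
        · exact h''
        · exact absurd h'' hxne
      have hy0 : y = 0 := by
        have hmul : y * (1 - algebraMap (ZMod p) (AlgebraicClosure (ZMod p)) i) = 0 := by
          linear_combination hnum
        rcases mul_eq_zero.mp hmul with h'' | h''
        · exact h''
        · exact absurd h'' hI1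
      have hfac : x * (x - 1) * (x + 1) = 0 := by
        rw [hy0] at hy2; linear_combination -hy2
      rcases mul_eq_zero.mp hfac with h'' | h''
      · rcases mul_eq_zero.mp h'' with h3 | h3
        · exact absurd h3 hx0
        · exact Or.inl (by linear_combination h3)
      · exact Or.inr (by linear_combination h'')
    · intro hx1
      refine ⟨?_, WeierstrassCurve.Affine.Point.some_ne_zero _⟩
      have hy0 : y = 0 := by
        have hx3x : x ^ 3 - x = 0 := by
          rcases hx1 with h1 | h1 <;> rw [h1] <;> ring
        have hy2' : y ^ 2 = 0 := by rw [hy2, hx3x]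
        exact pow_eq_zero_iff (n := 2) (by norm_num) |>.mp hy2'
      rw [hx3, hL, hy0]
      ring
end

section
/- Let p ≡ 1 (mod 8) be prime, √2 ∈ 𝔽_p a square root of 2, and suppose 1+√2 is a square in 𝔽_p. Write p = a² + b² with a odd, b even, a + b ≡ 1 (mod 4). Then 32 divides (a-1)² + b². -/
/-!
Let `A`, `B` be the residues of `a`, `b` mod `p`, so `A² + B² = 0`. Since `p ≡ b² (mod a)`, Jacobi
reciprocity makes `a` a square mod `p`; as `2 = s²` and `(A + B)² = 2AB`, so is `b`. The identity
`(2B + s(A + B))² = 4 (1 + s) B (A + B)` then makes `a + b` a square mod `p`. Reciprocity once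
more, now with `p ≡ 2b² (mod a + b)`, gives `(2 / |a + b|) = 1`, i.e. `a + b ≡ ±1 (mod 8)`, hence
`a + b ≡ 1 (mod 8)`. Together with `a² + b² ≡ 1 (mod 8)` this forces `4 ∣ b`, and then
`(a - 1)² + b² ≡ 0 (mod 32)`.
-/

open ZMod
open scoped NumberTheorySymbols

theorem IsSquare.of_mul_left {F : Type*} [Field F] {x y : F} (hx : IsSquare x)
    (hxy : IsSquare (x * y)) (hx0 : x ≠ 0) : IsSquare y := by
  simpa [hx0] using hxy.div hx

section SqAddSqEqZero

variable {F : Type*} [Field F] {x y : F}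

theorem add_ne_zero_of_sq_add_sq_eq_zero (h2 : (2 : F) ≠ 0) (hxy : x ^ 2 + y ^ 2 = 0)
    (hx0 : x ≠ 0) : x + y ≠ 0 := by
  intro h
  have : 2 * x ^ 2 = 0 := by linear_combination hxy + (x - y) * h
  simp_all

theorem isSquare_add_of_sq_add_sq_eq_zero {s : F} (h2 : (2 : F) ≠ 0) (hs : s ^ 2 = 2)
    (hs1 : IsSquare (1 + s)) (hxy : x ^ 2 + y ^ 2 = 0) (hx0 : x ≠ 0) (hx : IsSquare x) :
    IsSquare (x + y) := by
  have hy0 : y ≠ 0 := by rintro rfl; simp_all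
  have hs10 : 1 + s ≠ 0 := by
    intro h
    have : (1 : F) = 0 := by linear_combination (s - 1) * h - hs
    exact one_ne_zero this
  have hy : IsSquare y := by
    have h2sq : IsSquare (2 : F) := ⟨s, by rw [← hs, sq]⟩
    have hxy_sq : IsSquare (x * y) :=
      h2sq.of_mul_left ⟨x + y, by linear_combination -hxy⟩ h2
    exact hx.of_mul_left hxy_sq hx0
  have key : IsSquare ((2 : F) ^ 2 * ((1 + s) * (y * (x + y)))) :=
    ⟨2 * y + s * (x + y), by linear_combination (-(x + y) ^ 2) * hs - 2 * hxy⟩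
  have hy_add : IsSquare (y * (x + y)) :=
    hs1.of_mul_left ((IsSquare.sq 2).of_mul_left key (pow_ne_zero 2 h2)) hs10
  exact hy.of_mul_left hy_add hy0

end SqAddSqEqZero

theorem isCoprime_of_prime_eq_sq_add_sq {p : ℕ} (hp : p.Prime) {a b : ℤ}
    (hab : (p : ℤ) = a ^ 2 + b ^ 2) : IsCoprime a b := by
  rw [Int.isCoprime_iff_gcd_eq_one]
  have hg : ((Int.gcd a b * Int.gcd a b : ℕ) : ℤ) ∣ p := by
    rw [hab, Nat.cast_mul, ← sq]
    exact dvd_add (pow_dvd_pow_of_dvd (Int.gcd_dvd_left a b) 2)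
      (pow_dvd_pow_of_dvd (Int.gcd_dvd_right a b) 2)
  exact Nat.isUnit_iff.1 (hp.prime.squarefree _ (Int.natCast_dvd_natCast.1 hg))

theorem jacobiSym.quadratic_reciprocity_one_mod_four_natAbs {x : ℤ} {n : ℕ} (hx : Odd x)
    (hn : n % 4 = 1) : J(x | n) = J(n | x.natAbs) := by
  obtain ⟨m, rfl | rfl⟩ := Int.eq_nat_or_neg x
  · rw [Int.natAbs_natCast, quadratic_reciprocity_one_mod_four' (by simpa using hx) hn]
  · rw [Int.natAbs_neg, Int.natAbs_natCast, neg_eq_neg_one_mul, mul_left,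
      at_neg_one (Nat.odd_iff.2 (Nat.odd_of_mod_four_eq_one hn)), χ₄_nat_one_mod_four hn,
      one_mul, quadratic_reciprocity_one_mod_four' (by simpa using hx) hn]

theorem jacobiSym.natAbs_eq_of_dvd_sub {m c y d : ℤ} (h : d ∣ c * y ^ 2 - m)
    (hy : IsCoprime y d) : J(m | d.natAbs) = J(c | d.natAbs) := by
  have hmod : m ≡ c * y ^ 2 [ZMOD d.natAbs] := Int.modEq_iff_dvd.2 (Int.natAbs_dvd.2 h)
  have hgcd : y.gcd d.natAbs = 1 := by
    simpa [Int.gcd_def, Int.natAbs_abs] using Int.isCoprime_iff_gcd_eq_one.1 hy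
  rw [mod_left' hmod, mul_left, sq_one' hgcd, mul_one]

section SumOfTwoSquares

variable {p : ℕ} [Fact p.Prime] {a b : ℤ}

theorem legendreSym_eq_one_of_eq_sq_add_sq (hp4 : p % 4 = 1) (hab : (p : ℤ) = a ^ 2 + b ^ 2)
    (ha : Odd a) : legendreSym p a = 1 := by
  have hdvd : a ∣ 1 * b ^ 2 - p := ⟨-a, by rw [hab]; ring⟩
  rw [jacobiSym.legendreSym.to_jacobiSym,
    jacobiSym.quadratic_reciprocity_one_mod_four_natAbs ha hp4,
    jacobiSym.natAbs_eq_of_dvd_sub hdvd (isCoprime_of_prime_eq_sq_add_sq Fact.out hab).symm,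
    jacobiSym.one_left]

theorem legendreSym_add_eq_χ₈ (hp4 : p % 4 = 1) (hab : (p : ℤ) = a ^ 2 + b ^ 2)
    (hodd : Odd (a + b)) : legendreSym p (a + b) = χ₈ (a + b).natAbs := by
  have hdvd : a + b ∣ 2 * b ^ 2 - p := ⟨b - a, by rw [hab]; ring⟩
  have hcop : IsCoprime b (a + b) := by
    simpa using (isCoprime_of_prime_eq_sq_add_sq Fact.out hab).symm.add_mul_left_right 1
  rw [jacobiSym.legendreSym.to_jacobiSym,
    jacobiSym.quadratic_reciprocity_one_mod_four_natAbs hodd hp4,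
    jacobiSym.natAbs_eq_of_dvd_sub hdvd hcop, jacobiSym.at_two (Int.natAbs_odd.2 hodd)]

end SumOfTwoSquares

theorem thirty_two_dvd_sub_one_sq_add_sq {a b : ℤ} (hb : Even b) (hab8 : (a + b) % 8 = 1)
    (hsq8 : (a ^ 2 + b ^ 2) % 8 = 1) : 32 ∣ (a - 1) ^ 2 + b ^ 2 := by
  obtain ⟨v, rfl⟩ := hb
  obtain ⟨t, rfl⟩ : ∃ t, a = 1 + 8 * t - 2 * v := ⟨(a + (v + v) - 1) / 8, by omega⟩
  have hv : Even v := by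
    have : (1 + 8 * t - 2 * v) ^ 2 + (v + v) ^ 2 =
        1 + 8 * (2 * t + 8 * t ^ 2 - 4 * t * v + v ^ 2) - 4 * v := by ring
    rw [this] at hsq8
    exact Int.even_iff.2 (by omega)
  obtain ⟨w, rfl⟩ := hv
  exact ⟨2 * t ^ 2 - 2 * t * w + w ^ 2, by ring⟩

theorem stmt11 (p : ℕ) (hp : p.Prime) (h8 : p % 8 = 1) (s : ZMod p) (hs : s ^ 2 = 2)
    (hsq : IsSquare (1 + s)) (a b : ℤ) (hab : (p : ℤ) = a ^ 2 + b ^ 2)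
    (ha : Odd a) (hb : Even b) (habm : (a + b) % 4 = 1) :
    (32 : ℤ) ∣ (a - 1) ^ 2 + b ^ 2 := by
  have : Fact p.Prime := ⟨hp⟩
  have hp4 : p % 4 = 1 := by omega
  have h2 : (2 : ZMod p) ≠ 0 := by
    have : ¬ p ∣ 2 := Nat.not_dvd_of_pos_of_lt two_pos (hp.two_le.lt_of_ne (by omega))
    exact_mod_cast mt (ZMod.natCast_eq_zero_iff 2 p).1 this
  have hsum : (a : ZMod p) ^ 2 + (b : ZMod p) ^ 2 = 0 := by
    have := congrArg (Int.cast : ℤ → ZMod p) hab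
    push_cast at this
    rw [← this, ZMod.natCast_self]
  have ha0 : (a : ZMod p) ≠ 0 := by
    intro h
    have hb0 : (b : ZMod p) = 0 := by simpa [h] using hsum
    rw [ZMod.intCast_zmod_eq_zero_iff_dvd] at h hb0
    exact (Nat.prime_iff_prime_int.1 hp).not_isUnit
      ((isCoprime_of_prime_eq_sq_add_sq hp hab).isUnit_of_dvd' h hb0)
  have hab0 : ((a + b : ℤ) : ZMod p) ≠ 0 := by
    push_cast; exact add_ne_zero_of_sq_add_sq_eq_zero h2 hsum ha0
  have hsq_add : IsSquare ((a + b : ℤ) : ZMod p) := by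
    push_cast
    exact isSquare_add_of_sq_add_sq_eq_zero h2 hs hsq hsum ha0
      ((legendreSym.eq_one_iff p ha0).1 (legendreSym_eq_one_of_eq_sq_add_sq hp4 hab ha))
  have hχ₈ : χ₈ (a + b).natAbs = 1 := by
    rw [← legendreSym_add_eq_χ₈ hp4 hab (ha.add_even hb)]
    exact (legendreSym.eq_one_iff p hab0).2 hsq_add
  have hab8 : (a + b) % 8 = 1 := by
    rw [χ₈_nat_eq_if_mod_eight] at hχ₈
    have := Int.natAbs_eq (a + b)
    split_ifs at hχ₈ <;> omega
  exact thirty_two_dvd_sub_one_sq_add_sq hb hab8 (by rw [← hab]; omega)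
end

section
/- Let p ≡ 1 (mod 8) be prime, √2 ∈ 𝔽_p a square root of 2, and write p = a² + b² with a odd, b even, a + b ≡ 1 (mod 4). If 32 divides (a-1)² + b², then 1+√2 is a square in 𝔽_p. -/
/-!
Put `i = a / b`, a square root of `-1` in `𝔽_p`. Then `(1 + i + √2)² = 2 (1 + i) (1 + √2)`, so it
suffices that `2 b (a + b)` is a square mod `p`. Since `p ≡ 1 (mod 8)`, both `-1` and `2` are squares.
The odd part `m` of `b` is a square by reciprocity, because `p ≡ a² (mod m)`. The hypothesis
`32 ∣ (a - 1)² + b²` forces `a + b ≡ 1 (mod 8)`, so `J(2 | a + b) = 1`; together with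
`2p ≡ (a - b)² (mod a + b)` this gives `J(p | a + b) = 1`, and reciprocity makes `a + b` a square.
-/

theorem Int.eight_dvd_add_of_thirty_two_dvd_sq_add_sq {x y : ℤ} (h : 32 ∣ x ^ 2 + y ^ 2) :
    8 ∣ x + y := by
  have key : ∀ u v : ZMod 32, u ^ 2 + v ^ 2 = 0 → 4 * (u + v) = 0 := by decide
  have := key x y (by exact_mod_cast (ZMod.intCast_zmod_eq_zero_iff_dvd _ 32).mpr h)
  have h32 : (32 : ℤ) ∣ 4 * (x + y) :=
    (ZMod.intCast_zmod_eq_zero_iff_dvd _ 32).mp (by exact_mod_cast this)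
  omega

namespace Int

variable {p a b : ℤ}

theorem isCoprime_of_prime_eq_sq_add_sq (hp : Prime p) (hab : p = a ^ 2 + b ^ 2) :
    IsCoprime a b := by
  refine IsRelPrime.isCoprime fun d hda hdb ↦ hp.irreducible.squarefree d ?_
  rw [hab, ← sq]
  exact dvd_add (pow_dvd_pow_of_dvd hda 2) (pow_dvd_pow_of_dvd hdb 2)

theorem not_dvd_of_prime_eq_sq_add_sq (hp : Prime p) (hab : p = a ^ 2 + b ^ 2) : ¬ p ∣ b := by
  intro hpb
  have hpa : p ∣ a := hp.dvd_of_dvd_pow (n := 2) <| by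
    rw [eq_sub_of_add_eq hab.symm]
    exact dvd_sub dvd_rfl (dvd_pow hpb two_ne_zero)
  exact hp.not_isUnit ((isCoprime_of_prime_eq_sq_add_sq hp hab).isUnit_of_dvd' hpa hpb)

theorem isCoprime_sub_add (hab : IsCoprime a b) (hodd : Odd (a + b)) :
    IsCoprime (a - b) (a + b) := by
  have h2 : IsCoprime 2 (a + b) := prime_two.coprime_iff_not_dvd.mpr <| by
    rwa [← even_iff_two_dvd, Int.not_even_iff_odd]
  have ha : IsCoprime a (a + b) := by simpa [add_comm] using hab.add_mul_left_right 1
  rw [show a - b = 2 * a + (a + b) * -1 by ring]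
  exact (h2.mul_left ha).add_mul_left_left (-1)

end Int

theorem jacobiSym_eq_one_of_dvd_sub_sq {x c : ℤ} {m : ℕ} (h : (m : ℤ) ∣ x - c ^ 2)
    (hc : IsCoprime c m) : jacobiSym x m = 1 := by
  rw [jacobiSym.mod_left' (Int.modEq_iff_dvd.mpr h).symm,
    jacobiSym.sq_one' (Int.isCoprime_iff_gcd_eq_one.mp hc)]

namespace ZMod

variable {p : ℕ} [Fact p.Prime]

theorem isSquare_natCast_of_jacobiSym_eq_one (hp : p % 4 = 1) {m : ℕ} (hm : Odd m)
    (h : jacobiSym p m = 1) : IsSquare (m : ZMod p) := by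
  have := isSquare_of_jacobiSym_eq_one (a := m) (p := p)
    (by rwa [jacobiSym.quadratic_reciprocity_one_mod_four' hm hp])
  exact_mod_cast this

theorem isSquare_intCast_of_isSquare_natAbs (hp : p % 4 = 1) {n : ℤ}
    (h : IsSquare (n.natAbs : ZMod p)) : IsSquare (n : ZMod p) := by
  obtain ⟨m, rfl | rfl⟩ : ∃ m : ℕ, n = m ∨ n = -m := ⟨n.natAbs, Int.natAbs_eq n⟩
  · simpa using h
  · rw [Int.cast_neg, Int.cast_natCast, neg_eq_neg_one_mul]
    exact (exists_sq_eq_neg_one_iff.mpr (by omega)).mul (by simpa using h)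

theorem isSquare_intCast_of_dvd_sub_sq (hp : p % 8 = 1) {n c : ℤ} (hn : n ≠ 0)
    (hdvd : n ∣ p - c ^ 2) (hc : IsCoprime c n) : IsSquare (n : ZMod p) := by
  obtain ⟨k, m, hm, hnm⟩ := Nat.exists_eq_two_pow_mul_odd (Int.natAbs_ne_zero.mpr hn)
  have hmn : (m : ℤ) ∣ n := Int.natCast_dvd.mpr ⟨2 ^ k, by rw [hnm, mul_comm]⟩
  have hJ := jacobiSym_eq_one_of_dvd_sub_sq (hmn.trans hdvd) (hc.of_isCoprime_of_dvd_right hmn)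
  refine isSquare_intCast_of_isSquare_natAbs (by omega) ?_
  rw [hnm, Nat.cast_mul, Nat.cast_pow, Nat.cast_ofNat]
  exact ((exists_sq_eq_two_iff (by omega)).mpr (Or.inl hp)).pow k |>.mul
    (isSquare_natCast_of_jacobiSym_eq_one (by omega) hm hJ)

theorem isSquare_intCast_of_dvd_two_mul_sub_sq (hp : p % 4 = 1) {n c : ℤ}
    (hn : n % 8 = 1 ∨ n % 8 = 7) (hdvd : n ∣ 2 * p - c ^ 2) (hc : IsCoprime c n) :
    IsSquare (n : ZMod p) := by
  have hn' : n.natAbs % 8 = 1 ∨ n.natAbs % 8 = 7 := by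
    rcases Int.natAbs_eq n with h | h <;> omega
  have hodd : Odd n.natAbs := Nat.odd_iff.mpr (by omega)
  have hJ2 : jacobiSym 2 n.natAbs = 1 := by
    rw [jacobiSym.at_two hodd, χ₈_nat_eq_if_mod_eight, if_neg (by omega), if_pos hn']
  have hJ := jacobiSym_eq_one_of_dvd_sub_sq (Int.natAbs_dvd.mpr hdvd)
    (hc.of_isCoprime_of_dvd_right (Int.natAbs_dvd.mpr dvd_rfl))
  rw [jacobiSym.mul_left, hJ2, one_mul] at hJ
  exact isSquare_intCast_of_isSquare_natAbs hp (isSquare_natCast_of_jacobiSym_eq_one hp hodd hJ)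

end ZMod

theorem isSquare_one_add_of_sq_eq_two {F : Type*} [Field F] {a b s : F} (h2 : (2 : F) ≠ 0)
    (hb : b ≠ 0) (hab : a ^ 2 + b ^ 2 = 0) (hs : s ^ 2 = 2) (hsq : IsSquare (2 * b * (a + b))) :
    IsSquare (1 + s) := by
  have hab' : a + b ≠ 0 := fun h ↦ by
    have : 2 * b ^ 2 = 0 := by linear_combination hab - (a - b) * h
    simp_all
  have key : (a + b + s * b) ^ 2 = 2 * b * (a + b) * (1 + s) := by
    linear_combination hab + b ^ 2 * hs
  rw [show 1 + s = (a + b + s * b) ^ 2 / (2 * b * (a + b)) by field_simp; linear_combination -key]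
  exact (IsSquare.sq _).div hsq

theorem stmt12_general (p : ℕ) (hp : p.Prime) (h8 : p % 8 = 1) (s : ZMod p) (hs : s ^ 2 = 2)
    (a b : ℤ) (hab : (p : ℤ) = a ^ 2 + b ^ 2)
    (hdvd : (32 : ℤ) ∣ (a - 1) ^ 2 + b ^ 2) :
    IsSquare (1 + s) := by
  have := Fact.mk hp
  have hpZ : Prime (p : ℤ) := Nat.prime_iff_prime_int.mp hp
  have hcop := Int.isCoprime_of_prime_eq_sq_add_sq hpZ hab
  have hpb := Int.not_dvd_of_prime_eq_sq_add_sq hpZ hab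
  have hab8 : (a + b) % 8 = 1 := by
    have := Int.eight_dvd_add_of_thirty_two_dvd_sq_add_sq hdvd
    omega
  have hsq_b : IsSquare (b : ZMod p) :=
    ZMod.isSquare_intCast_of_dvd_sub_sq h8 (by rintro rfl; simp at hpb)
      ⟨b, by rw [hab]; ring⟩ hcop
  have hsq_ab : IsSquare ((a + b : ℤ) : ZMod p) :=
    ZMod.isSquare_intCast_of_dvd_two_mul_sub_sq (by omega) (Or.inl hab8)
      ⟨a + b, by rw [hab]; ring⟩
      (Int.isCoprime_sub_add hcop (Int.odd_iff.mpr (by omega)))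
  have hsq_2 : IsSquare (2 : ZMod p) := (ZMod.exists_sq_eq_two_iff (by omega)).mpr (Or.inl h8)
  refine isSquare_one_add_of_sq_eq_two (a := (a : ZMod p)) (b := (b : ZMod p)) ?_ ?_ ?_ hs ?_
  · exact Ring.two_ne_zero (by rw [ZMod.ringChar_zmod_n]; omega)
  · exact fun h ↦ hpb ((ZMod.intCast_zmod_eq_zero_iff_dvd b p).mp h)
  · exact_mod_cast (ZMod.intCast_zmod_eq_zero_iff_dvd _ p).mpr hab.dvd
  · push_cast at hsq_ab; exact (hsq_2.mul hsq_b).mul hsq_ab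

theorem stmt12 (p : ℕ) (hp : p.Prime) (h8 : p % 8 = 1) (s : ZMod p) (hs : s ^ 2 = 2)
    (a b : ℤ) (hab : (p : ℤ) = a ^ 2 + b ^ 2)
    (ha : Odd a) (hb : Even b) (habm : (a + b) % 4 = 1)
    (hdvd : (32 : ℤ) ∣ (a - 1) ^ 2 + b ^ 2) :
    IsSquare (1 + s) :=
  stmt12_general p hp h8 s hs a b hab hdvd
end

section
/- Let p ≡ 1 (mod 8) be prime, √2 ∈ 𝔽_p a square root of 2, and write p = a² + b² with a odd, b even, a + b ≡ 1 (mod 4). Then 1+√2 is a square in 𝔽_p if and only if (a-1)² + b² ≡ 0 (mod 32). -/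
/-!
Let `i = a / b`, a square root of `-1` in `𝔽_p`. The product `(1 + √2)(1 + i)` is a nonzero
square, so `1 + √2` and `1 + i` have the same quadratic character, and `(1 + i) b = a + b`.
Quadratic reciprocity together with `p ≡ b² (mod a)` and `p ≡ 2b² (mod a + b)` gives
`(a / p) = 1` and `(a + b / p) = (2 / |a + b|)`; since `2ab ≡ (a + b)² (mod p)` and `2` is a
square, also `(b / p) = 1`. Hence `1 + √2` is a square iff `a + b ≡ ±1 (mod 8)`. Given
`a + b ≡ 1 (mod 4)` and `4 ∣ b` (as `p ≡ 1 (mod 8)`), this is `(a - 1)² + b² ≡ 0 (mod 32)`.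
-/

theorem Int.isCoprime_of_squarefree_sq_add_sq {a b : ℤ} (h : Squarefree (a ^ 2 + b ^ 2)) :
    IsCoprime a b := by
  rw [Int.isCoprime_iff_gcd_eq_one]
  have hg : ((a.gcd b : ℤ) * a.gcd b) ∣ a ^ 2 + b ^ 2 := by
    rw [← sq]
    exact dvd_add (pow_dvd_pow_of_dvd (Int.gcd_dvd_left a b) 2)
      (pow_dvd_pow_of_dvd (Int.gcd_dvd_right a b) 2)
  simpa [Int.isUnit_iff] using h _ hg

theorem IsCoprime.right_ne_zero_of_sq_add_sq_eq_zero {R : Type*} [CommRing R] [NoZeroDivisors R]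
    [Nontrivial R] {x y : R} (hxy : IsCoprime x y) (h : x ^ 2 + y ^ 2 = 0) : y ≠ 0 := by
  rintro rfl
  obtain rfl : x = 0 := pow_eq_zero_iff two_ne_zero |>.mp (by simpa using h)
  exact not_isCoprime_zero_zero hxy

theorem legendreSym_eq_jacobiSym_of_dvd_sub {p : ℕ} [Fact p.Prime] (hp : p % 4 = 1) {x : ℤ}
    (hx : Odd x) {y : ℤ} (hxy : x ∣ p - y) : legendreSym p x = jacobiSym y x.natAbs := by
  have hp' : Odd p := Nat.odd_iff.mpr (by omega)
  have habs : jacobiSym x p = jacobiSym (x.natAbs : ℤ) p := by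
    rcases Int.natAbs_eq x with h | h
    · rw [← h]
    · conv_lhs => rw [h]
      rw [jacobiSym.neg _ hp', ZMod.χ₄_nat_one_mod_four hp, one_mul]
  rw [jacobiSym.legendreSym.to_jacobiSym, habs,
    jacobiSym.quadratic_reciprocity_one_mod_four' (Int.natAbs_odd.mpr hx) hp]
  exact jacobiSym.mod_left' (Int.modEq_iff_dvd.mpr (Int.natAbs_dvd.mpr hxy)).symm

theorem ZMod.χ₈_natAbs_eq_one_iff {n : ℤ} (hn : n % 4 = 1) : χ₈ n.natAbs = 1 ↔ n % 8 = 1 := by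
  rw [χ₈_nat_eq_if_mod_eight]
  split_ifs <;> norm_num <;> omega

theorem one_add_ne_zero_of_sq_eq_two {R : Type*} [CommRing R] [Nontrivial R] {s : R}
    (hs : s ^ 2 = 2) : 1 + s ≠ 0 :=
  fun h => one_ne_zero (by linear_combination (s - 1) * h - hs : (1 : R) = 0)

theorem one_add_ne_zero_of_sq_eq_neg_one {R : Type*} [CommRing R] (h2 : (2 : R) ≠ 0) {i : R}
    (hi : i ^ 2 = -1) : 1 + i ≠ 0 :=
  fun h => h2 (by linear_combination (1 - i) * h + hi)

theorem quadraticChar_one_add_eq_of_sq_eq_two_of_sq_eq_neg_one {F : Type*} [Field F] [Fintype F]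
    [DecidableEq F] (hF : ringChar F ≠ 2) {s i : F} (hs : s ^ 2 = 2) (hi : i ^ 2 = -1) :
    quadraticChar F (1 + s) = quadraticChar F (1 + i) := by
  have h2 : (2 : F) ≠ 0 := Ring.two_ne_zero hF
  have hs0 := one_add_ne_zero_of_sq_eq_two hs
  have hi0 := one_add_ne_zero_of_sq_eq_neg_one h2 hi
  -- `(1 + i) * s / 2 = (1 + i) / s` is a square root of `i`
  have hsq : (1 + s) * (1 + i) = (1 + (1 + i) * s / 2) ^ 2 := by
    field_simp
    linear_combination (-(1 + i) ^ 2) * hs - 2 * hi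
  have hw : 1 + (1 + i) * s / 2 ≠ 0 := by
    intro h
    rw [h, zero_pow two_ne_zero] at hsq
    exact mul_ne_zero hs0 hi0 hsq
  calc quadraticChar F (1 + s)
      = quadraticChar F ((1 + s) * (1 + i)) * quadraticChar F (1 + i) := by
        rw [map_mul, mul_assoc, ← sq, quadraticChar_sq_one hi0, mul_one]
    _ = quadraticChar F (1 + i) := by rw [hsq, quadraticChar_sq_one' hw, one_mul]

theorem Int.add_emod_eight_eq_one_iff {a b : ℤ} (ha : Odd a) (hb : Even b)
    (hab : (a + b) % 4 = 1) (h8 : (a ^ 2 + b ^ 2) % 8 = 1) :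
    (a + b) % 8 = 1 ↔ ((a - 1) ^ 2 + b ^ 2) % 32 = 0 := by
  obtain ⟨k, rfl⟩ := ha
  obtain ⟨c, rfl⟩ := hb
  obtain ⟨m, hm⟩ := Int.even_mul_succ_self k
  have hc : Even (c ^ 2) := by
    have : (2 * k + 1) ^ 2 + (c + c) ^ 2 = 4 * (k * (k + 1)) + 4 * c ^ 2 + 1 := by ring
    rw [Int.even_iff]
    omega
  obtain ⟨d, rfl⟩ := (Int.even_pow' two_ne_zero).mp hc
  obtain ⟨e, rfl⟩ : Even k := by rw [Int.even_iff]; omega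
  obtain ⟨n, hn⟩ := Int.even_mul_succ_self e
  obtain ⟨n', hn'⟩ := Int.even_mul_succ_self d
  have : (2 * (e + e) + 1 - 1) ^ 2 + (d + d + (d + d)) ^ 2
      = 16 * (e * (e + 1)) + 16 * (d * (d + 1)) - 16 * (e + d) := by ring
  omega

theorem stmt13 (p : ℕ) (hp : p.Prime) (h8 : p % 8 = 1) (s : ZMod p) (hs : s ^ 2 = 2)
    (a b : ℤ) (hab : (p : ℤ) = a ^ 2 + b ^ 2)
    (ha : Odd a) (hb : Even b) (habm : (a + b) % 4 = 1) :
    IsSquare (1 + s) ↔ ((a - 1) ^ 2 + b ^ 2) % 32 = 0 := by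
  have := Fact.mk hp
  have hp4 : p % 4 = 1 := by omega
  have hF : ringChar (ZMod p) ≠ 2 := by rw [ZMod.ringChar_zmod_n]; omega
  have hco : IsCoprime a b := Int.isCoprime_of_squarefree_sq_add_sq
    (hab ▸ Int.squarefree_natCast.mpr (Irreducible.squarefree hp))
  have hsum : (a : ZMod p) ^ 2 + (b : ZMod p) ^ 2 = 0 := by
    simpa using (congrArg (Int.cast : ℤ → ZMod p) hab).symm
  have hb0 : (b : ZMod p) ≠ 0 :=
    (hco.map (Int.castRingHom (ZMod p))).right_ne_zero_of_sq_add_sq_eq_zero hsum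
  have hi : ((a : ZMod p) / b) ^ 2 = -1 := by
    field_simp
    linear_combination hsum
  have hab_eq : ((a + b : ℤ) : ZMod p) = (1 + a / b) * b := by
    push_cast
    field_simp
    ring
  have hab0 : ((a + b : ℤ) : ZMod p) ≠ 0 := hab_eq ▸
    mul_ne_zero (one_add_ne_zero_of_sq_eq_neg_one (Ring.two_ne_zero hF) hi) hb0
  set χ := quadraticChar (ZMod p)
  have hs0 : s ≠ 0 := by rintro rfl; exact Ring.two_ne_zero hF (by simpa using hs.symm)
  have hχ2 : χ 2 = 1 := hs ▸ quadraticChar_sq_one' hs0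
  have hχa : χ a = 1 := by
    change legendreSym p a = 1
    rw [legendreSym_eq_jacobiSym_of_dvd_sub hp4 ha (y := b ^ 2) ⟨a, by rw [hab]; ring⟩]
    refine jacobiSym.sq_one' ?_
    simpa [Int.gcd, Int.natAbs_abs] using Int.isCoprime_iff_gcd_eq_one.mp hco.symm
  have hχb : χ b = 1 := by
    have h2ab : ((a + b : ℤ) : ZMod p) ^ 2 = 2 * a * b := by push_cast; linear_combination hsum
    simpa [hχ2, hχa] using (congrArg χ h2ab).symm.trans (quadraticChar_sq_one' hab0)
  have hχab : χ (a + b : ℤ) = ZMod.χ₈ (a + b).natAbs := by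
    change legendreSym p (a + b) = _
    rw [legendreSym_eq_jacobiSym_of_dvd_sub hp4 (ha.add_even hb) (y := 2 * b ^ 2)
      ⟨a - b, by rw [hab]; ring⟩, jacobiSym.mul_left, jacobiSym.sq_one', mul_one,
      jacobiSym.at_two (Int.natAbs_odd.mpr (ha.add_even hb))]
    simpa [Int.gcd, Int.natAbs_abs] using
      Int.isCoprime_iff_gcd_eq_one.mp (hco.symm.add_mul_left_right 1)
  have hχs : χ (1 + s) = χ (a + b : ℤ) := by
    rw [quadraticChar_one_add_eq_of_sq_eq_two_of_sq_eq_neg_one hF hs hi, hab_eq, map_mul, hχb,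
      mul_one]
  rw [← quadraticChar_one_iff_isSquare (one_add_ne_zero_of_sq_eq_two hs), hχs, hχab,
    ZMod.χ₈_natAbs_eq_one_iff habm, Int.add_emod_eight_eq_one_iff ha hb habm (by omega)]
end

section
/- Let p ≡ 1 (mod 8) be prime with p = a² + b² = c² + 8d², where a, b, c, d are integers, a odd, b even, and a + b ≡ 1 (mod 4). Then (a-1)² + b² ≡ 0 (mod 32) if and only if d is even. -/
/-!
Modulo `p` we have `b² = -a²`, so `(a + b)² = 2ab` and `(a + b)⁴ = -4a⁴`, while `c⁴ = 64d⁴`.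
Hence `((a + b)·2d)⁴ = -(ac)⁴`, and raising this to the power `(p - 1)/8` gives, by Euler's
criterion, `(a+b|p)(2|p)(d|p) = (-1)^((p-1)/8) (a|p)(c|p)`.

Quadratic reciprocity evaluates every symbol from the two representations of `p`:
`(2|p) = 1`; `(a|p) = (d|p) = 1` since `p` is a square modulo `a` and modulo `d`;
`(a+b|p) = χ₈(a+b)` since `p ≡ 2a² (mod a + b)`; `(c|p) = χ₈(c)` since `p ≡ 2(2d)² (mod c)`.
As `(p-1)/8 = (c²-1)/8 + d²` and `χ₈(c) = (-1)^((c²-1)/8)`, the identity becomes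
`χ₈(a + b) = (-1)^d`, and with `a ≡ 1`, `b ≡ 0 (mod 4)` both `χ₈(a + b) = 1` and
`32 ∣ (a - 1)² + b²` are equivalent to `a + b ≡ 1 (mod 8)`.
-/

open ZMod

theorem Int.sq_emod_two (m : ℤ) : m ^ 2 % 2 = m % 2 := by
  have h := Int.even_pow' (m := m) two_ne_zero
  simp only [Int.even_iff] at h
  omega

theorem Int.sq_emod_sixteen_of_odd {c : ℤ} (hc : Odd c) :
    c ^ 2 % 16 = if c % 8 = 1 ∨ c % 8 = 7 then 1 else 9 := by
  have h16 : c ^ 2 % 16 = (c % 16) ^ 2 % 16 := by rw [pow_two, pow_two, Int.mul_emod]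
  have h8 : c % 8 = c % 16 % 8 := (Int.emod_emod_of_dvd c (by norm_num)).symm
  have h2 : c % 16 % 2 = 1 := by
    rw [Int.emod_emod_of_dvd c (by norm_num)]
    exact Int.odd_iff.mp hc
  have hlo : 0 ≤ c % 16 := Int.emod_nonneg c (by norm_num)
  have hhi : c % 16 < 16 := Int.emod_lt_of_pos c (by norm_num)
  rw [h16, h8]
  generalize c % 16 = r at *
  interval_cases r <;> simp_all

theorem Int.emod_four_eq_zero_of_sq_add_sq_emod_eight {a b : ℤ} (ha : Odd a) (hb : Even b)
    (h : (a ^ 2 + b ^ 2) % 8 = 1) : b % 4 = 0 := by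
  obtain ⟨k, rfl⟩ := ha
  obtain ⟨m, rfl⟩ := hb
  obtain ⟨j, hj⟩ := Int.even_mul_succ_self k
  have hsum : (2 * k + 1) ^ 2 + (m + m) ^ 2 = 8 * j + 1 + 4 * m ^ 2 := by
    linear_combination 4 * hj
  have hm := Int.sq_emod_two m
  omega

theorem Int.sub_one_sq_add_sq_emod_thirtyTwo_eq_zero_iff {a b : ℤ} (ha : a % 4 = 1)
    (hb : b % 4 = 0) : ((a - 1) ^ 2 + b ^ 2) % 32 = 0 ↔ (a + b) % 8 = 1 := by
  obtain ⟨k, rfl⟩ : ∃ k, a = 4 * k + 1 := ⟨a / 4, by omega⟩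
  obtain ⟨m, rfl⟩ : ∃ m, b = 4 * m := ⟨b / 4, by omega⟩
  have hsum : (4 * k + 1 - 1) ^ 2 + (4 * m) ^ 2 = 16 * (k ^ 2 + m ^ 2) := by ring
  have hk := Int.sq_emod_two k
  have hm := Int.sq_emod_two m
  omega

theorem Int.isCoprime_of_prime_eq_sq_add_mul_sq {p : ℕ} (hp : p.Prime) {x y k : ℤ}
    (h : (p : ℤ) = x ^ 2 + k * y ^ 2) : IsCoprime x y := by
  rw [Int.isCoprime_iff_gcd_eq_one]
  have hsq : (x.gcd y : ℤ) * x.gcd y ∣ p := by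
    rw [h, ← sq]
    exact dvd_add (pow_dvd_pow_of_dvd (Int.gcd_dvd_left x y) 2)
      ((pow_dvd_pow_of_dvd (Int.gcd_dvd_right x y) 2).mul_left k)
  have := Int.isUnit_iff.mp ((Nat.prime_iff_prime_int.mp hp).squarefree _ hsq)
  omega

theorem ZMod.χ₈_int_eq_one_iff_of_emod_four_eq_one {n : ℤ} (hn : n % 4 = 1) :
    χ₈ n = 1 ↔ n % 8 = 1 := by
  rw [χ₈_int_eq_if_mod_eight]
  split_ifs <;> simp <;> omega

theorem neg_one_pow_div_eight_mul_χ₈_eq_one_iff {n : ℕ} {c d : ℤ} (hc : Odd c)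
    (h : (n : ℤ) = c ^ 2 + 8 * d ^ 2) : (-1) ^ (n / 8) * χ₈ c = 1 ↔ Even d := by
  have hc16 := Int.sq_emod_sixteen_of_odd hc
  have hd := Int.sq_emod_two d
  have hc2 := Int.odd_iff.mp hc
  simp only [neg_one_pow_eq_ite, Nat.even_iff, χ₈_int_eq_if_mod_eight, Int.even_iff]
  split_ifs at * <;> simp <;> omega

theorem mul_pow_four_eq_neg_of_sq_add_sq_eq_zero {R : Type*} [CommRing R] {a b c d : R}
    (hab : a ^ 2 + b ^ 2 = 0) (hcd : c ^ 2 + 8 * d ^ 2 = 0) :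
    ((a + b) * 2 * d) ^ 4 = -(a * c) ^ 4 := by
  linear_combination 16 * d ^ 4 * (a ^ 2 + b ^ 2 + 4 * a * b + 4 * a ^ 2) * hab +
    a ^ 4 * (c ^ 2 + 8 * d ^ 2 - 16 * d ^ 2) * hcd

theorem jacobiSym_natCast_eq_of_dvd_sub_mul_sq {p n : ℕ} (hp : p % 4 = 1) (hn : Odd n)
    {k y : ℤ} (hdvd : (n : ℤ) ∣ p - k * y ^ 2) (hy : IsCoprime y n) :
    jacobiSym n p = jacobiSym k n := by
  rw [jacobiSym.quadratic_reciprocity_one_mod_four' hn hp,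
    jacobiSym.mod_left' (Int.modEq_iff_dvd.mpr hdvd).symm, jacobiSym.mul_left,
    jacobiSym.sq_one' (Int.isCoprime_iff_gcd_eq_one.mp hy), mul_one]

section

variable {p : ℕ} [Fact p.Prime]

theorem legendreSym_eq_jacobiSym_natAbs (hp : p % 4 = 1) (x : ℤ) :
    legendreSym p x = jacobiSym x.natAbs p := by
  rw [jacobiSym.legendreSym.to_jacobiSym]
  obtain ⟨n, rfl | rfl⟩ := Int.eq_nat_or_neg x
  · rfl
  · rw [jacobiSym.neg _ (Nat.odd_iff.mpr (by omega)), χ₄_nat_one_mod_four hp, one_mul,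
      Int.natAbs_neg, Int.natAbs_natCast]

theorem legendreSym_two_eq_one (hp : p % 8 = 1) : legendreSym p 2 = 1 := by
  rw [legendreSym.at_two (by omega), χ₈_nat_mod_eight, hp]
  rfl

theorem legendreSym_eq_χ₈_of_dvd_sub_two_mul_sq (hp : p % 4 = 1) {x y : ℤ} (hx : Odd x)
    (hdvd : x ∣ p - 2 * y ^ 2) (hxy : IsCoprime y x) : legendreSym p x = χ₈ x := by
  have hn : Odd x.natAbs := hx.natAbs
  rw [legendreSym_eq_jacobiSym_natAbs hp, jacobiSym_natCast_eq_of_dvd_sub_mul_sq hp hn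
    (Int.natAbs_dvd.mpr hdvd) (by rwa [Int.natCast_natAbs, IsCoprime.abs_right_iff]),
    jacobiSym.at_two hn, χ₈_nat_eq_if_mod_eight, χ₈_int_eq_if_mod_eight]
  have := Int.odd_iff.mp hx
  split_ifs <;> omega

theorem legendreSym_eq_one_of_dvd_sub_sq (hp : p % 8 = 1) {x y : ℤ} (hdvd : x ∣ p - y ^ 2)
    (hxy : IsCoprime y x) : legendreSym p x = 1 := by
  have hx0 : x.natAbs ≠ 0 := by
    intro hx
    rw [Int.natAbs_eq_zero] at hx
    subst hx
    rw [Int.isUnit_sq (isCoprime_zero_right.mp hxy), zero_dvd_iff, sub_eq_zero] at hdvd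
    exact (Fact.out : p.Prime).one_lt.ne' (by exact_mod_cast hdvd)
  obtain ⟨t, m, hm, hxm⟩ := Nat.exists_eq_two_pow_mul_odd hx0
  have hmx : (m : ℤ) ∣ x := Int.ofNat_dvd_left.mpr (hxm ▸ dvd_mul_left m _)
  have hJm : jacobiSym m p = 1 := by
    rw [jacobiSym_natCast_eq_of_dvd_sub_mul_sq (k := 1) (by omega) hm
      (by rw [one_mul]; exact hmx.trans hdvd) (hxy.of_isCoprime_of_dvd_right hmx),
      jacobiSym.one_left]
  rw [legendreSym_eq_jacobiSym_natAbs (by omega), hxm, Nat.cast_mul, Nat.cast_pow,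
    Nat.cast_ofNat, jacobiSym.mul_left, jacobiSym.pow_left,
    ← jacobiSym.legendreSym.to_jacobiSym, legendreSym_two_eq_one hp, one_pow, one_mul, hJm]

theorem legendreSym_eq_neg_one_pow_mul_of_pow_four_eq_neg (hp : p % 8 = 1) {x y : ℤ}
    (h : (x : ZMod p) ^ 4 = -(y : ZMod p) ^ 4) :
    legendreSym p x = (-1) ^ (p / 8) * legendreSym p y := by
  have hchar : ringChar (ZMod p) ≠ 2 := by rw [ringChar_zmod_n]; omega
  have hmem (z : ℤ) : legendreSym p z ∈ ({0, 1, -1} : Set ℤ) := quadraticChar_isQuadratic _ _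
  refine Int.cast_injOn_of_ringChar_ne_two hchar (hmem x) ?_ ?_
  · rcases neg_one_pow_eq_or ℤ (p / 8) with h1 | h1 <;>
      obtain h2 | h2 | h2 : legendreSym p y = 0 ∨ legendreSym p y = 1 ∨ legendreSym p y = -1 :=
        hmem y <;> simp [h1, h2]
  · have hdiv : p / 2 = 4 * (p / 8) := by omega
    push_cast
    rw [legendreSym.eq_pow, legendreSym.eq_pow, hdiv, pow_mul, pow_mul, h, neg_pow]

theorem legendreSym_add_mul_two_mul_eq (hp : p % 8 = 1) {a b c d : ℤ}
    (hab : (p : ℤ) = a ^ 2 + b ^ 2) (hcd : (p : ℤ) = c ^ 2 + 8 * d ^ 2) :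
    legendreSym p ((a + b) * 2 * d) = (-1) ^ (p / 8) * legendreSym p (a * c) := by
  have hab' : ((a ^ 2 + b ^ 2 : ℤ) : ZMod p) = 0 := by rw [← hab]; simp
  have hcd' : ((c ^ 2 + 8 * d ^ 2 : ℤ) : ZMod p) = 0 := by rw [← hcd]; simp
  push_cast at hab' hcd'
  refine legendreSym_eq_neg_one_pow_mul_of_pow_four_eq_neg hp ?_
  push_cast
  exact mul_pow_four_eq_neg_of_sq_add_sq_eq_zero hab' hcd'

end

theorem stmt14 (p : ℕ) (hp : p.Prime) (h8 : p % 8 = 1)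
    (a b c d : ℤ) (hab : (p : ℤ) = a ^ 2 + b ^ 2) (hcd : (p : ℤ) = c ^ 2 + 8 * d ^ 2)
    (ha : Odd a) (hb : Even b) (habm : (a + b) % 4 = 1) :
    ((a - 1) ^ 2 + b ^ 2) % 32 = 0 ↔ Even d := by
  have := Fact.mk hp
  have hp4 : p % 4 = 1 := by omega
  have hb4 : b % 4 = 0 := Int.emod_four_eq_zero_of_sq_add_sq_emod_eight ha hb (by omega)
  have hc : Odd c := by
    have := Int.sq_emod_two c
    rw [Int.odd_iff]
    omega
  have hcoab : IsCoprime a b :=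
    Int.isCoprime_of_prime_eq_sq_add_mul_sq hp (k := 1) (by rw [hab, one_mul])
  have hcocd : IsCoprime c d := Int.isCoprime_of_prime_eq_sq_add_mul_sq hp hcd
  have hLab : legendreSym p (a + b) = χ₈ ((a + b : ℤ) : ZMod 8) :=
    legendreSym_eq_χ₈_of_dvd_sub_two_mul_sq hp4 (ha.add_even hb) ⟨b - a, by rw [hab]; ring⟩
      (by simpa [add_comm] using hcoab.add_mul_left_right 1)
  have hLc : legendreSym p c = χ₈ c :=
    legendreSym_eq_χ₈_of_dvd_sub_two_mul_sq (y := 2 * d) hp4 hc ⟨c, by rw [hcd]; ring⟩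
      ((Int.isCoprime_two_left.mpr hc).mul_left hcocd.symm)
  have hLa : legendreSym p a = 1 :=
    legendreSym_eq_one_of_dvd_sub_sq h8 ⟨a, by rw [hab]; ring⟩ hcoab.symm
  have hLd : legendreSym p d = 1 :=
    legendreSym_eq_one_of_dvd_sub_sq h8 ⟨8 * d, by rw [hcd]; ring⟩ hcocd
  have hkey := legendreSym_add_mul_two_mul_eq h8 hab hcd
  rw [legendreSym.mul, legendreSym.mul, legendreSym.mul, legendreSym_two_eq_one h8, hLab, hLc,
    hLa, hLd, mul_one, mul_one, one_mul] at hkey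
  rw [Int.sub_one_sq_add_sq_emod_thirtyTwo_eq_zero_iff (by omega) hb4,
    ← χ₈_int_eq_one_iff_of_emod_four_eq_one habm, hkey,
    neg_one_pow_div_eight_mul_χ₈_eq_one_iff hc hcd]
end

section
/- Let p ≡ 1 (mod 8) be prime. Then the number of 𝔽_p-points of the elliptic curve y² = x³ - x is divisible by 8. -/
/-!
Over a field `F` of characteristic `≠ 2` containing a square root `i` of `-1`, the curve
`y² = x³ - x` has the `F`-point `P = (i, i - 1)` with `2P = (0, 0)`, so `P` has order `4`. The
`2`-torsion point `T = (1, 0)` is not a multiple of `P`, since the only multiples of `P` killed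
by `2` are `0` and `(0, 0)`. So the image of `T` in the quotient by `⟨P⟩` has order `2`, and
`8 = 4 · 2` divides the number of points. In `𝔽_p`, `-1` is a square because
`p ≡ 1 (mod 4)`.
-/

section Group

variable {G : Type*}

theorem notMem_zmultiples_of_addOrderOf_eq_four [AddGroup G] {P T : G}
    (hP : addOrderOf P = 4) (hT : 2 • T = 0) (hT0 : T ≠ 0) (hTP : T ≠ 2 • P) :
    T ∉ AddSubgroup.zmultiples P := by
  rintro ⟨n, rfl : n • P = T⟩
  have h4 : ((4 : ℕ) : ℤ) ∣ 2 * n := by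
    rw [← hP, addOrderOf_dvd_iff_zsmul_eq_zero, mul_zsmul]
    exact_mod_cast hT
  rw [← mod_addOrderOf_zsmul, hP] at hT0 hTP
  obtain hn | hn : n % 4 = 0 ∨ n % 4 = 2 := by omega
  · exact hT0 (by rw [Nat.cast_ofNat, hn, zero_zsmul])
  · exact hTP (by rw [Nat.cast_ofNat, hn, two_zsmul, two_nsmul])

theorem eight_dvd_natCard_of_addOrderOf_eq_four [AddCommGroup G] {P T : G}
    (hP : addOrderOf P = 4) (hT : 2 • T = 0) (hT0 : T ≠ 0) (hTP : T ≠ 2 • P) :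
    8 ∣ Nat.card G := by
  set H := AddSubgroup.zmultiples P
  have hTH : T ∉ H := notMem_zmultiples_of_addOrderOf_eq_four hP hT hT0 hTP
  have hTorder : addOrderOf (T : G ⧸ H) = 2 :=
    addOrderOf_eq_prime (by rw [← QuotientAddGroup.mk_nsmul, hT]; rfl)
      (mt (QuotientAddGroup.eq_zero_iff T).mp hTH)
  rw [← H.card_mul_index, Nat.card_zmultiples, hP]
  exact mul_dvd_mul_left 4 (hTorder ▸ addOrderOf_dvd_natCard (T : G ⧸ H))

end Group

open WeierstrassCurve.Affine

def xCubeSubX (R : Type*) [CommRing R] : WeierstrassCurve.Affine R :=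
  { a₁ := 0, a₂ := 0, a₃ := 0, a₄ := -1, a₆ := 0 }

namespace xCubeSubX

section CommRing

variable {R : Type*} [CommRing R]

lemma negY_eq (x y : R) : (xCubeSubX R).negY x y = -y := by
  simp [negY, xCubeSubX]

lemma nonsingular_iff (x y : R) : (xCubeSubX R).Nonsingular x y ↔
    y ^ 2 = x ^ 3 - x ∧ (3 * x ^ 2 - 1 ≠ 0 ∨ 2 * y ≠ 0) := by
  rw [WeierstrassCurve.Affine.nonsingular_iff', equation_iff]
  simp only [xCubeSubX, zero_mul, add_zero, zero_sub, neg_ne_zero, mul_zero, neg_one_mul,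
    ← sub_eq_add_neg]

end CommRing

variable {F : Type*} [Field F]

lemma nonsingular_zero_zero : (xCubeSubX F).Nonsingular 0 0 :=
  (nonsingular_iff 0 0).mpr ⟨by ring, .inl (by norm_num)⟩

lemma nonsingular_one_zero (h2 : (2 : F) ≠ 0) : (xCubeSubX F).Nonsingular 1 0 :=
  (nonsingular_iff 1 0).mpr ⟨by ring, .inl (by norm_num [h2])⟩

lemma sub_one_ne_zero_of_sq_eq_neg_one (h2 : (2 : F) ≠ 0) {i : F} (hi : i ^ 2 = -1) :
    i - 1 ≠ 0 :=
  fun h ↦ h2 (by linear_combination -(i + 1) * h + hi)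

lemma nonsingular_of_sq_eq_neg_one (h2 : (2 : F) ≠ 0) {i : F} (hi : i ^ 2 = -1) :
    (xCubeSubX F).Nonsingular i (i - 1) :=
  (nonsingular_iff _ _).mpr ⟨by linear_combination (1 - i) * hi,
    .inr (mul_ne_zero h2 (sub_one_ne_zero_of_sq_eq_neg_one h2 hi))⟩

open Point

variable [DecidableEq F]

lemma two_nsmul_some_of_y_eq_zero {x : F} (h : (xCubeSubX F).Nonsingular x 0) :
    2 • some x 0 h = 0 := by
  rw [two_nsmul, add_self_of_Y_eq (by rw [negY_eq, _root_.neg_zero])]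

lemma two_nsmul_some_of_sq_eq_neg_one (h2 : (2 : F) ≠ 0) {i : F} (hi : i ^ 2 = -1) :
    2 • some i (i - 1) (nonsingular_of_sq_eq_neg_one h2 hi) = some 0 0 nonsingular_zero_zero := by
  have hi1 := sub_one_ne_zero_of_sq_eq_neg_one h2 hi
  have h2y : (i - 1) - -(i - 1) ≠ 0 := by
    rw [sub_neg_eq_add, ← two_mul]; exact mul_ne_zero h2 hi1
  have hy : i - 1 ≠ (xCubeSubX F).negY i (i - 1) := by
    rw [negY_eq]; exact sub_ne_zero.mp h2y
  have hslope : (xCubeSubX F).slope i i (i - 1) (i - 1) = -2 / (i - 1) := by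
    rw [slope_of_Y_ne rfl hy, negY_eq, div_eq_div_iff h2y hi1]
    simp only [xCubeSubX]
    linear_combination 3 * (i - 1) * hi
  have hx : (xCubeSubX F).addX i i (-2 / (i - 1)) = 0 := by
    simp only [addX, xCubeSubX]
    field_simp
    linear_combination (4 - 2 * i) * hi
  rw [two_nsmul, add_self_of_Y_ne hy, some.injEq, hslope, hx]
  refine ⟨rfl, ?_⟩
  rw [addY, negAddY, hx, negY_eq]
  field_simp
  linear_combination -hi

lemma addOrderOf_some_of_sq_eq_neg_one (h2 : (2 : F) ≠ 0) {i : F} (hi : i ^ 2 = -1) :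
    addOrderOf (some i (i - 1) (nonsingular_of_sq_eq_neg_one h2 hi)) = 4 := by
  refine addOrderOf_eq_prime_pow (p := 2) (n := 1) ?_ ?_
  · rw [pow_one, two_nsmul_some_of_sq_eq_neg_one h2 hi]
    exact some_ne_zero _
  · rw [pow_succ, pow_one, mul_nsmul, two_nsmul_some_of_sq_eq_neg_one h2 hi,
      two_nsmul_some_of_y_eq_zero]

theorem eight_dvd_natCard_point (h2 : (2 : F) ≠ 0) (hF : IsSquare (-1 : F)) :
    8 ∣ Nat.card (xCubeSubX F).Point := by
  obtain ⟨i, hi⟩ := hF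
  replace hi : i ^ 2 = -1 := by rw [hi, sq]
  refine eight_dvd_natCard_of_addOrderOf_eq_four (addOrderOf_some_of_sq_eq_neg_one h2 hi)
    (two_nsmul_some_of_y_eq_zero (nonsingular_one_zero h2)) (some_ne_zero _) ?_
  rw [two_nsmul_some_of_sq_eq_neg_one h2 hi, Ne, some.injEq]
  exact fun h ↦ one_ne_zero h.1

end xCubeSubX

theorem stmt17 (p : ℕ) (hp : p.Prime) (h8 : p % 8 = 1) :
    8 ∣ Nat.card (Ecurve p).Point := by
  have : Fact p.Prime := ⟨hp⟩
  have h2 : (2 : ZMod p) ≠ 0 := Ring.two_ne_zero (by rw [ZMod.ringChar_zmod_n]; omega)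
  classical
  exact xCubeSubX.eight_dvd_natCard_point h2 (ZMod.exists_sq_eq_neg_one_iff.mpr (by omega))
end
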